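/- Let x_1, …, x_n ∈ ℝ^d, b : ℕ → ℝ, and H be as in the multivariate learning setup (unit-norm data, b_0 ≥ 1, b_k ≥ 1/k² for k ≥ 1, Σ_k b_k < ∞, H positive definite). Let g(t) = Σ_k a_k t^k be a power series with auxiliary function g̃(t) = Σ_k |a_k| t^k, and let h be given by a multivariate power-series family with auxiliary function h̃, such that h̃(1) and h̃′(1) are finite and h̃(1) lies strictly inside the radius of convergence of g (so that g̃(h̃(1)), g̃′(h̃(1)), and g̃(h̃(0)) converge). Define y ∈ ℝⁿ by y_a = g(h(x_a)). Then √(yᵀ H⁻¹ y) ≤ g̃′(h̃(1)) h̃′(1) + g̃(h̃(0)). -/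

import Mathlib

open Matrix
open scoped RealInnerProductSpace

/-- The `k`-th auxiliary coefficient `ãₖ = ∑_v |a_{k,v}| ∏ᵢ ‖β_{k,v,i}‖` of a
multivariate power-series family. -/
noncomputable def auxCoef (d : ℕ) (a : ℕ → ℕ → ℝ)
    (β : (k : ℕ) → ℕ → Fin k → EuclideanSpace ℝ (Fin d)) (k : ℕ) : ℝ :=
  ∑' v : ℕ, |a k v| * ∏ i : Fin k, ‖β k v i‖

/-- The function `x ↦ ∑_k ∑_v a_{k,v} ∏ᵢ ⟪β_{k,v,i}, x⟫` represented by a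
multivariate power-series family. -/
noncomputable def familyFun (d : ℕ) (a : ℕ → ℕ → ℝ)
    (β : (k : ℕ) → ℕ → Fin k → EuclideanSpace ℝ (Fin d))
    (x : EuclideanSpace ℝ (Fin d)) : ℝ :=
  ∑' k : ℕ, ∑' v : ℕ, a k v * ∏ i : Fin k, ⟪β k v i, x⟫

/-!
Put `u = H⁻¹ y`, so that `s = yᵀ H⁻¹ y = uᵀ H u = ∑ₘ bₘ Qₘ` with
`Qₘ = ∑ u_c u_c' ⟪x_c, x_c'⟫ᵐ = ‖∑ u_c x_c^{⊗m}‖² ≥ 0`; hence `Qₘ ≤ s / bₘ ≤ max(m, 1)² s`.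
By Cauchy–Schwarz in the `m`-th tensor power, a monomial `p = ∏ᵢ ⟪γᵢ, ·⟫` of degree `m`
satisfies `|∑ u_c p(x_c)| ≤ ∏ ‖γᵢ‖ √Qₘ ≤ ∏ ‖γᵢ‖ max(m, 1) √s`. Expanding `hᵏ` into monomials,
the degrees weighted by the masses sum to `(h̃ᵏ)′(1)` and the constant ones to `h̃(0)ᵏ`, so
`|∑ u_c h(x_c)ᵏ| ≤ (k h̃′(1) h̃(1)ᵏ⁻¹ + h̃(0)ᵏ) √s`. Summing against the coefficients of `g`,
`s = ∑ u_c y_c ≤ (g̃′(h̃(1)) h̃′(1) + g̃(h̃(0))) √s`.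
-/

open Finset

theorem summable_abs_prod_pi {ι : Type*} {k : ℕ} {f : Fin k → ι → ℝ}
    (hf : ∀ i, Summable fun x => |f i x|) :
    Summable fun T : Fin k → ι => |∏ i, f i (T i)| := by
  induction k with
  | zero => exact Summable.of_finite
  | succ k ih =>
    have hprod := (hf 0).norm.mul_norm (ih fun i => hf i.succ).norm
    refine (hprod.comp_injective (Fin.consEquiv fun _ => ι).symm.injective).congr fun T => ?_
    simp [Fin.prod_univ_succ, Fin.consEquiv, Fin.tail, abs_mul]

theorem hasSum_prod_pi {ι : Type*} {k : ℕ} {f : Fin k → ι → ℝ}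
    (hf : ∀ i, Summable fun x => |f i x|) :
    HasSum (fun T : Fin k → ι => ∏ i, f i (T i)) (∏ i, ∑' x, f i x) := by
  refine (summable_abs_prod_pi hf).of_abs.hasSum_iff.2 ?_
  induction k with
  | zero => simp
  | succ k ih =>
    have hf0 : Summable fun x => ‖f 0 x‖ := hf 0
    have hrest : Summable fun T : Fin k → ι => ‖∏ i, f i.succ (T i)‖ :=
      summable_abs_prod_pi fun i => hf i.succ
    rw [← (Fin.consEquiv fun _ => ι).tsum_eq, Fin.prod_univ_succ, ← ih fun i => hf i.succ,
      tsum_mul_tsum_of_summable_norm hf0 hrest]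
    exact tsum_congr fun p => by simp [Fin.consEquiv, Fin.prod_univ_succ]

/-- The Leibniz rule `(μ(t)^k)' = k μ'(t) μ(t)^(k-1)` at the level of coefficients, with `φ`
in the role of the degree. -/
theorem hasSum_sum_mul_prod_pi {J : Type*} {μ φ : J → ℝ} (hμ : Summable fun j => |μ j|)
    (hφμ : Summable fun j => |φ j * μ j|) (k : ℕ) :
    HasSum (fun T : Fin k → J => (∑ i, φ (T i)) * ∏ i, μ (T i))
      (k * ((∑' j, φ j * μ j) * (∑' j, μ j) ^ (k - 1))) := by
  classical
  have hterm (i₀ : Fin k) :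
      HasSum (fun T : Fin k → J => ∏ i, if i = i₀ then φ (T i) * μ (T i) else μ (T i))
        ((∑' j, φ j * μ j) * (∑' j, μ j) ^ (k - 1)) := by
    have hf (i : Fin k) : Summable fun j => |if i = i₀ then φ j * μ j else μ j| := by
      split_ifs
      exacts [hφμ, hμ]
    have hsum (i : Fin k) : (∑' j, if i = i₀ then φ j * μ j else μ j) =
        if i = i₀ then ∑' j, φ j * μ j else ∑' j, μ j := by
      split_ifs <;> rfl
    convert hasSum_prod_pi hf using 1
    simp [hsum, prod_ite, filter_eq', filter_ne', card_erase_of_mem]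
  convert hasSum_sum (s := univ) fun i₀ _ => hterm i₀ using 1
  · ext T
    rw [sum_mul]
    refine sum_congr rfl fun i₀ _ => ?_
    rw [prod_ite, filter_eq', filter_ne', if_pos (mem_univ i₀), prod_singleton, mul_assoc,
      mul_prod_erase _ (fun i => μ (T i)) (mem_univ i₀)]
  · simp

theorem hasSum_prod_of_nonneg {α β : Type*} {f : α × β → ℝ} (hf : 0 ≤ f)
    (hslice : ∀ a, Summable fun b => f (a, b)) (htot : Summable fun a => ∑' b, f (a, b)) :
    HasSum f (∑' a, ∑' b, f (a, b)) := by
  have hs := (summable_prod_of_nonneg hf).2 ⟨hslice, htot⟩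
  rw [← hs.tsum_prod' hslice]
  exact hs.hasSum

theorem summable_nat_mul_abs_mul_pow_sub_one {a : ℕ → ℝ} {q r : ℝ} (hq : 0 ≤ q) (hqr : q < r)
    (ha : Summable fun k => |a k| * r ^ k) :
    Summable fun k : ℕ => (k : ℝ) * |a k| * q ^ (k - 1) := by
  refine Summable.of_nonneg_of_le (fun k => by positivity) (fun k => ?_) (ha.div_const (r - q))
  have hbernoulli := pow_add_mul_le_add_pow hq (by linarith : 0 ≤ 2 * q + (r - q)) k
  rw [add_sub_cancel] at hbernoulli
  have hmean : (k : ℝ) * q ^ (k - 1) * (r - q) ≤ r ^ k := by linarith [pow_nonneg hq k]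
  rw [le_div_iff₀ (sub_pos.2 hqr)]
  calc (k : ℝ) * |a k| * q ^ (k - 1) * (r - q) = |a k| * ((k : ℝ) * q ^ (k - 1) * (r - q)) := by
        ring
    _ ≤ |a k| * r ^ k := by gcongr

theorem hasSum_abs_mul_nat_mul_pow_add_pow {a : ℕ → ℝ} {S D Z r : ℝ} (hZ : 0 ≤ Z) (hZS : Z ≤ S)
    (hSr : S < r) (ha : Summable fun k => |a k| * r ^ k) :
    HasSum (fun k => |a k| * (k * (D * S ^ (k - 1)) + Z ^ k))
      ((∑' k : ℕ, (k : ℝ) * |a k| * S ^ (k - 1)) * D + ∑' k : ℕ, |a k| * Z ^ k) := by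
  have hZr : Summable fun k => |a k| * Z ^ k :=
    Summable.of_nonneg_of_le (fun k => by positivity)
      (fun k => by gcongr; exact hZS.trans hSr.le) ha
  exact ((summable_nat_mul_abs_mul_pow_sub_one (hZ.trans hZS) hSr ha).hasSum.mul_right D |>.add
    hZr.hasSum).congr_fun fun k => by ring

theorem hasSum_mul_sum_mul_pow {κ : Type*} [Fintype κ] {a : ℕ → ℝ} {r : ℝ}
    (ha : Summable fun k => |a k| * r ^ k) {f : κ → ℝ} (hf : ∀ c, |f c| ≤ r) (u : κ → ℝ) :
    HasSum (fun k => a k * ∑ c, u c * f c ^ k) (∑ c, (∑' k, a k * f c ^ k) * u c) := by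
  have hterm (c : κ) : Summable fun k => a k * f c ^ k := by
    refine Summable.of_norm_bounded ha fun k => ?_
    rw [norm_mul, norm_pow, Real.norm_eq_abs, Real.norm_eq_abs]
    gcongr
    exact hf c
  refine (hasSum_sum fun c _ => (hterm c).hasSum.mul_right (u c)).congr_fun fun k => ?_
  rw [mul_sum]
  exact sum_congr rfl fun c _ => by ring

theorem sqrt_le_of_le_mul_sqrt {s M : ℝ} (hM : 0 ≤ M) (h : s ≤ M * √s) : √s ≤ M := by
  rcases le_or_gt s 0 with hs | hs
  · rwa [Real.sqrt_eq_zero'.2 hs]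
  · nlinarith [Real.sqrt_pos.2 hs, Real.sq_sqrt hs.le]

/-- `γ₁ ⊗ ⋯ ⊗ γ_ι` in coordinates, identifying `(ℝᵈ)^{⊗ι}` with `ℝ^(ι → Fin d)`. -/
noncomputable def pureTensor {d : ℕ} {ι : Type*} [Fintype ι] [DecidableEq ι]
    (γ : ι → EuclideanSpace ℝ (Fin d)) : EuclideanSpace ℝ (ι → Fin d) :=
  WithLp.toLp 2 fun j => ∏ i, γ i (j i)

def innerPowForm {E κ : Type*} [Fintype κ] [Inner ℝ E] (x : κ → E) (u : κ → ℝ) (m : ℕ) : ℝ :=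
  ∑ c, ∑ c', u c * u c' * ⟪x c, x c'⟫ ^ m

section PureTensor

variable {d : ℕ} {ι κ : Type*} [Fintype ι] [DecidableEq ι] [Fintype κ]

theorem inner_pureTensor (v w : ι → EuclideanSpace ℝ (Fin d)) :
    ⟪pureTensor v, pureTensor w⟫ = ∏ i, ⟪v i, w i⟫ := by
  simp only [pureTensor, PiLp.inner_apply, RCLike.inner_apply, conj_trivial, ← prod_mul_distrib]
  exact (Fintype.prod_sum fun i l => w i l * v i l).symm

theorem norm_pureTensor (γ : ι → EuclideanSpace ℝ (Fin d)) : ‖pureTensor γ‖ = ∏ i, ‖γ i‖ := by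
  rw [norm_eq_sqrt_real_inner, inner_pureTensor]
  simp only [real_inner_self_eq_norm_sq, prod_pow]
  exact Real.sqrt_sq (by positivity)

theorem innerPowForm_card_eq_norm_sq (x : κ → EuclideanSpace ℝ (Fin d)) (u : κ → ℝ) :
    innerPowForm x u (Fintype.card ι) = ‖∑ c, u c • pureTensor fun _ : ι => x c‖ ^ 2 := by
  rw [← real_inner_self_eq_norm_sq, sum_inner]
  simp [inner_sum, inner_smul_left, inner_smul_right, inner_pureTensor, innerPowForm, mul_assoc,
    mul_left_comm]

theorem innerPowForm_nonneg (x : κ → EuclideanSpace ℝ (Fin d)) (u : κ → ℝ) (m : ℕ) :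
    0 ≤ innerPowForm x u m := by
  simpa using (innerPowForm_card_eq_norm_sq (ι := Fin m) x u).ge.trans' (sq_nonneg _)

/-- Cauchy–Schwarz in the `card ι`-fold tensor power. -/
theorem abs_sum_mul_prod_inner_le (x : κ → EuclideanSpace ℝ (Fin d)) (u : κ → ℝ)
    (γ : ι → EuclideanSpace ℝ (Fin d)) :
    |∑ c, u c * ∏ i, ⟪γ i, x c⟫| ≤ (∏ i, ‖γ i‖) * √(innerPowForm x u (Fintype.card ι)) := by
  have h : ∑ c, u c * ∏ i, ⟪γ i, x c⟫ =
      ⟪pureTensor γ, ∑ c, u c • pureTensor fun _ : ι => x c⟫ := by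
    simp [inner_sum, inner_smul_right, inner_pureTensor]
  rw [h, innerPowForm_card_eq_norm_sq, Real.sqrt_sq (norm_nonneg _), ← norm_pureTensor]
  exact abs_real_inner_le_norm _ _

end PureTensor

theorem hasSum_innerPowForm {κ E : Type*} [Fintype κ] [NormedAddCommGroup E]
    [InnerProductSpace ℝ E] {x : κ → E} (hx : ∀ c, ‖x c‖ ≤ 1) {b : ℕ → ℝ} (hb : Summable b)
    {H : Matrix κ κ ℝ} (hH : ∀ c c', H c c' = ∑' k, b k * ⟪x c, x c'⟫ ^ k) (u : κ → ℝ) :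
    HasSum (fun m => b m * innerPowForm x u m) (u ⬝ᵥ (H *ᵥ u)) := by
  have hentry (c c' : κ) : HasSum (fun k => b k * ⟪x c, x c'⟫ ^ k) (H c c') := by
    rw [hH]
    refine (hb.abs.of_norm_bounded fun k => ?_).hasSum
    rw [norm_mul, norm_pow, Real.norm_eq_abs]
    have hinner : ‖⟪x c, x c'⟫‖ ≤ 1 :=
      (norm_inner_le_norm _ _).trans (mul_le_one₀ (hx c) (norm_nonneg _) (hx c'))
    exact mul_le_of_le_one_right (abs_nonneg _) (pow_le_one₀ (norm_nonneg _) hinner)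
  have hval : u ⬝ᵥ (H *ᵥ u) = ∑ c, ∑ c', u c * u c' * H c c' := by
    simp only [dotProduct, mulVec, mul_sum]
    exact sum_congr rfl fun _ _ => sum_congr rfl fun _ _ => by ring
  rw [hval]
  refine (hasSum_sum fun c _ => hasSum_sum fun c' _ =>
    (hentry c c').mul_left (u c * u c')).congr_fun fun m => ?_
  simp only [innerPowForm, mul_sum]
  exact sum_congr rfl fun _ _ => sum_congr rfl fun _ _ => by ring

theorem sqrt_le_mul_sqrt_of_hasSum {b Q : ℕ → ℝ} {s : ℝ} (hb0 : 1 ≤ b 0)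
    (hbk : ∀ k : ℕ, 1 ≤ k → 1 / (k : ℝ) ^ 2 ≤ b k) (hQ : ∀ m, 0 ≤ Q m)
    (hs : HasSum (fun m => b m * Q m) s) (m : ℕ) :
    √(Q m) ≤ ((m : ℝ) + if m = 0 then 1 else 0) * √s := by
  have hb (k : ℕ) : 0 ≤ b k := by
    rcases Nat.eq_zero_or_pos k with rfl | hk
    · linarith
    · exact (hbk k hk).trans' (by positivity)
  have hterm : b m * Q m ≤ s := le_hasSum hs m fun k _ => mul_nonneg (hb k) (hQ k)
  have hQs : Q m ≤ ((m : ℝ) + if m = 0 then 1 else 0) ^ 2 * s := by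
    rcases Nat.eq_zero_or_pos m with rfl | hm
    · simpa using (le_mul_of_one_le_left (hQ 0) hb0).trans hterm
    · rw [if_neg hm.ne', add_zero]
      calc Q m = (m : ℝ) ^ 2 * (1 / (m : ℝ) ^ 2 * Q m) := by field_simp
        _ ≤ (m : ℝ) ^ 2 * (b m * Q m) := by gcongr; exacts [hQ m, hbk m hm]
        _ ≤ (m : ℝ) ^ 2 * s := by gcongr
  calc √(Q m) ≤ √(((m : ℝ) + if m = 0 then 1 else 0) ^ 2 * s) := Real.sqrt_le_sqrt hQs
    _ = _ := by rw [Real.sqrt_mul (sq_nonneg _), Real.sqrt_sq (by positivity)]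

noncomputable def familyTerm {d : ℕ} (ah : ℕ → ℕ → ℝ)
    (βh : (k : ℕ) → ℕ → Fin k → EuclideanSpace ℝ (Fin d)) (p : ℕ × ℕ)
    (x : EuclideanSpace ℝ (Fin d)) : ℝ :=
  ah p.1 p.2 * ∏ i : Fin p.1, ⟪βh p.1 p.2 i, x⟫

noncomputable def familyMass {d : ℕ} (ah : ℕ → ℕ → ℝ)
    (βh : (k : ℕ) → ℕ → Fin k → EuclideanSpace ℝ (Fin d)) (p : ℕ × ℕ) : ℝ :=
  |ah p.1 p.2| * ∏ i : Fin p.1, ‖βh p.1 p.2 i‖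

section Family

variable {d : ℕ} {ah : ℕ → ℕ → ℝ} {βh : (k : ℕ) → ℕ → Fin k → EuclideanSpace ℝ (Fin d)}
  {κ : Type*} [Fintype κ]

theorem auxCoef_nonneg (k : ℕ) : 0 ≤ auxCoef d ah βh k :=
  tsum_nonneg fun _ => by positivity

theorem familyMass_nonneg (p : ℕ × ℕ) : 0 ≤ familyMass ah βh p := by
  unfold familyMass; positivity

theorem abs_familyTerm_le {x : EuclideanSpace ℝ (Fin d)} (hx : ‖x‖ ≤ 1) (p : ℕ × ℕ) :
    |familyTerm ah βh p x| ≤ familyMass ah βh p := by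
  rw [familyTerm, familyMass, abs_mul, abs_prod]
  gcongr with i
  exact (abs_real_inner_le_norm _ _).trans (mul_le_of_le_one_right (norm_nonneg _) hx)

/-- A product of monomials of the family is one monomial, of degree `∑ i, (T i).1`. -/
theorem abs_sum_mul_prod_familyTerm_le (x : κ → EuclideanSpace ℝ (Fin d)) (u : κ → ℝ) {k : ℕ}
    (T : Fin k → ℕ × ℕ) :
    |∑ c, u c * ∏ i, familyTerm ah βh (T i) (x c)| ≤
      (∏ i, familyMass ah βh (T i)) * √(innerPowForm x u (∑ i, (T i).1)) := by
  let γ (q : Σ i : Fin k, Fin (T i).1) : EuclideanSpace ℝ (Fin d) := βh (T q.1).1 (T q.1).2 q.2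
  have hterm (y : EuclideanSpace ℝ (Fin d)) :
      ∏ i, familyTerm ah βh (T i) y = (∏ i, ah (T i).1 (T i).2) * ∏ q, ⟪γ q, y⟫ := by
    simp only [familyTerm, prod_mul_distrib, ← univ_sigma_univ, prod_sigma, γ]
  have hmass : ∏ i, familyMass ah βh (T i) = |∏ i, ah (T i).1 (T i).2| * ∏ q, ‖γ q‖ := by
    simp only [familyMass, prod_mul_distrib, abs_prod, ← univ_sigma_univ, prod_sigma, γ]
  have hcard : Fintype.card (Σ i : Fin k, Fin (T i).1) = ∑ i, (T i).1 := by simp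
  simp_rw [hterm, mul_left_comm (u _), ← mul_sum, abs_mul, hmass, ← hcard, mul_assoc]
  gcongr
  exact abs_sum_mul_prod_inner_le x u γ

variable (hauxh : ∀ k : ℕ, Summable (fun v : ℕ => |ah k v| * ∏ i : Fin k, ‖βh k v i‖))
include hauxh

theorem hasSum_familyMass (hh1 : Summable (fun k : ℕ => auxCoef d ah βh k)) :
    HasSum (familyMass ah βh) (∑' k, auxCoef d ah βh k) :=
  hasSum_prod_of_nonneg familyMass_nonneg hauxh hh1

theorem hasSum_fst_mul_familyMass (hh1' : Summable (fun k : ℕ => (k : ℝ) * auxCoef d ah βh k)) :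
    HasSum (fun p => (p.1 : ℝ) * familyMass ah βh p) (∑' k : ℕ, (k : ℝ) * auxCoef d ah βh k) := by
  have hslice (k : ℕ) : ∑' v, (k : ℝ) * familyMass ah βh (k, v) = k * auxCoef d ah βh k :=
    tsum_mul_left
  have h := hasSum_prod_of_nonneg (f := fun p : ℕ × ℕ => (p.1 : ℝ) * familyMass ah βh p)
    (fun p => mul_nonneg p.1.cast_nonneg (familyMass_nonneg p)) (fun k => (hauxh k).mul_left (k : ℝ))
    (hh1'.congr fun k => (hslice k).symm)
  rwa [tsum_congr hslice] at h

theorem hasSum_familyMass_of_fst_eq_zero :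
    HasSum (fun p : ℕ × ℕ => if p.1 = 0 then familyMass ah βh p else 0) (auxCoef d ah βh 0) := by
  refine ((Prod.mk_right_injective 0).hasSum_iff fun p hp => ?_).1 (hauxh 0).hasSum
  rw [if_neg]
  rintro h
  exact hp ⟨p.2, Prod.ext h.symm rfl⟩

theorem familyFun_eq_tsum (hh1 : Summable (fun k : ℕ => auxCoef d ah βh k))
    {x : EuclideanSpace ℝ (Fin d)} (hx : ‖x‖ ≤ 1) :
    familyFun d ah βh x = ∑' p, familyTerm ah βh p x := by
  have hs : Summable fun p => familyTerm ah βh p x :=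
    (hasSum_familyMass hauxh hh1).summable.of_norm_bounded (abs_familyTerm_le hx)
  exact (hs.tsum_prod' fun k => (hauxh k).of_norm_bounded fun v => abs_familyTerm_le hx (k, v)).symm

theorem abs_familyFun_le (hh1 : Summable (fun k : ℕ => auxCoef d ah βh k))
    {x : EuclideanSpace ℝ (Fin d)} (hx : ‖x‖ ≤ 1) :
    |familyFun d ah βh x| ≤ ∑' k, auxCoef d ah βh k := by
  rw [familyFun_eq_tsum hauxh hh1 hx]
  exact tsum_of_norm_bounded (f := fun p => familyTerm ah βh p x) (hasSum_familyMass hauxh hh1)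
    (abs_familyTerm_le hx)

theorem hasSum_prod_familyTerm (hh1 : Summable (fun k : ℕ => auxCoef d ah βh k))
    {x : EuclideanSpace ℝ (Fin d)} (hx : ‖x‖ ≤ 1) (k : ℕ) :
    HasSum (fun T : Fin k → ℕ × ℕ => ∏ i, familyTerm ah βh (T i) x) (familyFun d ah βh x ^ k) := by
  have h := hasSum_prod_pi (k := k) (f := fun _ p => familyTerm ah βh p x) fun _ =>
    Summable.of_nonneg_of_le (fun _ => abs_nonneg _) (abs_familyTerm_le hx)
      (hasSum_familyMass hauxh hh1).summable
  rwa [prod_const, card_univ, Fintype.card_fin, ← familyFun_eq_tsum hauxh hh1 hx] at h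

theorem hasSum_fst_mul_prod_familyMass_add_prod (hh1 : Summable (fun k : ℕ => auxCoef d ah βh k))
    (hh1' : Summable (fun k : ℕ => (k : ℝ) * auxCoef d ah βh k)) (k : ℕ) :
    HasSum (fun T : Fin k → ℕ × ℕ => (∑ i, ((T i).1 : ℝ)) * ∏ i, familyMass ah βh (T i) +
        ∏ i, if (T i).1 = 0 then familyMass ah βh (T i) else 0)
      (k * ((∑' j : ℕ, (j : ℝ) * auxCoef d ah βh j) * (∑' j, auxCoef d ah βh j) ^ (k - 1)) +
        auxCoef d ah βh 0 ^ k) := by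
  have hmass := hasSum_familyMass hauxh hh1
  have hdeg := hasSum_fst_mul_familyMass hauxh hh1'
  have hconst := hasSum_familyMass_of_fst_eq_zero hauxh
  have hsum := hasSum_sum_mul_prod_pi (φ := fun p : ℕ × ℕ => (p.1 : ℝ)) hmass.summable.abs
    hdeg.summable.abs k
  have hprod := hasSum_prod_pi (k := k) fun _ => hconst.summable.abs
  rw [hdeg.tsum_eq, hmass.tsum_eq] at hsum
  rw [hconst.tsum_eq, prod_const, card_univ, Fintype.card_fin] at hprod
  exact hsum.add hprod

theorem abs_sum_mul_familyFun_pow_le (hh1 : Summable (fun k : ℕ => auxCoef d ah βh k))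
    (hh1' : Summable (fun k : ℕ => (k : ℝ) * auxCoef d ah βh k))
    {x : κ → EuclideanSpace ℝ (Fin d)} (hx : ∀ c, ‖x c‖ ≤ 1)
    {u : κ → ℝ} {s : ℝ}
    (hQ : ∀ m : ℕ, √(innerPowForm x u m) ≤ ((m : ℝ) + if m = 0 then 1 else 0) * √s) (k : ℕ) :
    |∑ c, u c * familyFun d ah βh (x c) ^ k| ≤
      (k * ((∑' j : ℕ, (j : ℝ) * auxCoef d ah βh j) * (∑' j, auxCoef d ah βh j) ^ (k - 1)) +
        auxCoef d ah βh 0 ^ k) * √s := by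
  have hexpand := hasSum_sum (s := univ) fun c _ =>
    (hasSum_prod_familyTerm hauxh hh1 (hx c) k).mul_left (u c)
  refine hexpand.norm_le_of_bounded
    ((hasSum_fst_mul_prod_familyMass_add_prod hauxh hh1 hh1' k).mul_right √s) fun T => ?_
  have hprod : 0 ≤ ∏ i, familyMass ah βh (T i) := prod_nonneg fun i _ => familyMass_nonneg _
  calc ‖∑ c, u c * ∏ i, familyTerm ah βh (T i) (x c)‖
      ≤ (∏ i, familyMass ah βh (T i)) * √(innerPowForm x u (∑ i, (T i).1)) :=
        abs_sum_mul_prod_familyTerm_le x u T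
    _ ≤ (∏ i, familyMass ah βh (T i)) *
        (((∑ i, (T i).1 : ℕ) + if ∑ i, (T i).1 = 0 then 1 else 0) * √s) := by gcongr; exact hQ _
    _ = _ := by
        simp only [Fintype.prod_ite_zero, sum_eq_zero_iff, mem_univ, true_implies]
        split_ifs <;> push_cast <;> ring

end Family

theorem stmt8 (n d : ℕ) (x : Fin n → EuclideanSpace ℝ (Fin d))
    (hx : ∀ a, ‖x a‖ = 1)
    (b : ℕ → ℝ) (hb0 : 1 ≤ b 0) (hbk : ∀ k : ℕ, 1 ≤ k → 1 / (k : ℝ) ^ 2 ≤ b k)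
    (hb_sum : Summable b)
    (H : Matrix (Fin n) (Fin n) ℝ)
    (hH : ∀ a c, H a c = ∑' k : ℕ, b k * ⟪x a, x c⟫ ^ k)
    (hHpd : H.PosDef)
    (a : ℕ → ℝ)
    (ah : ℕ → ℕ → ℝ) (βh : (k : ℕ) → ℕ → Fin k → EuclideanSpace ℝ (Fin d))
    (hauxh : ∀ k : ℕ, Summable (fun v : ℕ => |ah k v| * ∏ i : Fin k, ‖βh k v i‖))
    (hh1 : Summable (fun k : ℕ => auxCoef d ah βh k))
    (hh1' : Summable (fun k : ℕ => (k : ℝ) * auxCoef d ah βh k))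
    (hR : ∃ r : ℝ, (∑' k : ℕ, auxCoef d ah βh k) < r ∧
      Summable (fun k : ℕ => |a k| * r ^ k))
    (y : Fin n → ℝ)
    (hy : ∀ c, y c = ∑' k : ℕ, a k * (familyFun d ah βh (x c)) ^ k) :
    Real.sqrt (y ⬝ᵥ (H⁻¹ *ᵥ y)) ≤
      (∑' k : ℕ, (k : ℝ) * |a k| * (∑' j : ℕ, auxCoef d ah βh j) ^ (k - 1)) *
        (∑' k : ℕ, (k : ℝ) * auxCoef d ah βh k) +
      ∑' k : ℕ, |a k| * (auxCoef d ah βh 0) ^ k := by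
  obtain ⟨r, hSr, ha⟩ := hR
  have hx' (c : Fin n) : ‖x c‖ ≤ 1 := (hx c).le
  have hS : 0 ≤ ∑' k : ℕ, auxCoef d ah βh k := tsum_nonneg auxCoef_nonneg
  have hD : 0 ≤ ∑' k : ℕ, (k : ℝ) * auxCoef d ah βh k :=
    tsum_nonneg fun k => mul_nonneg k.cast_nonneg (auxCoef_nonneg k)
  have hZ : 0 ≤ auxCoef d ah βh 0 := auxCoef_nonneg 0
  set u := H⁻¹ *ᵥ y
  have hquad : HasSum (fun m => b m * innerPowForm x u m) (y ⬝ᵥ u) := by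
    have hHu : H *ᵥ u = y := by
      rw [mulVec_mulVec, mul_nonsing_inv _ ((isUnit_iff_isUnit_det H).1 hHpd.isUnit), one_mulVec]
    rw [← hHu, dotProduct_comm]
    exact hasSum_innerPowForm hx' hb_sum hH u
  have hseries : HasSum (fun k => a k * ∑ c, u c * familyFun d ah βh (x c) ^ k) (y ⬝ᵥ u) := by
    simpa only [dotProduct, ← hy] using
      hasSum_mul_sum_mul_pow ha (fun c => (abs_familyFun_le hauxh hh1 (hx' c)).trans hSr.le) u
  have hM := hasSum_abs_mul_nat_mul_pow_add_pow (D := ∑' k : ℕ, (k : ℝ) * auxCoef d ah βh k)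
    hZ (hh1.le_tsum 0 fun k _ => auxCoef_nonneg k) hSr ha
  refine sqrt_le_of_le_mul_sqrt (hM.nonneg fun k => by positivity) ?_
  refine (le_abs_self _).trans (hseries.norm_le_of_bounded (hM.mul_right _) fun k => ?_)
  rw [norm_mul, Real.norm_eq_abs, Real.norm_eq_abs, mul_assoc]
  gcongr
  exact abs_sum_mul_familyFun_pow_le hauxh hh1 hh1' hx'
    (sqrt_le_mul_sqrt_of_hasSum hb0 hbk (innerPowForm_nonneg x u) hquad) k
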